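/- arXiv:1804.01733 — 5 statements merged into one kernel-verified Lean document; each statement's English description precedes it below -/
import Mathlib

section
/- The pair (P_K⁺, P_𝒪⁺) is a Hecke pair: for every g ∈ P_K⁺, writing Γ = P_𝒪⁺, the double coset ΓgΓ contains only finitely many left cosets and finitely many right cosets of Γ; that is, the sets {hΓ : h ∈ ΓgΓ} and {Γh : h ∈ ΓgΓ} are both finite. -/
/-- An element of a number field is *totally positive* if it is positive in every
real embedding. -/
def TotallyPositive (K : Type*) [Field K] (x : K) : Prop :=
  ∀ φ : K →+* ℝ, 0 < φ x

/-- The `ax + b` group of a field `K`: pairs `(a, b)` with `a ∈ Kˣ`, `b ∈ K`, acting as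
`t ↦ a * t + b`, with composition as group law. -/
@[ext]
structure AffPair (K : Type*) [Field K] where
  a : Kˣ
  b : K

namespace AffPair

variable {K : Type*} [Field K]

instance : Mul (AffPair K) := ⟨fun p q => ⟨p.a * q.a, p.b + (p.a : K) * q.b⟩⟩
instance : One (AffPair K) := ⟨⟨1, 0⟩⟩
instance : Inv (AffPair K) := ⟨fun p => ⟨p.a⁻¹, -(((p.a⁻¹ : Kˣ) : K) * p.b)⟩⟩

@[simp] lemma mul_a (p q : AffPair K) : (p * q).a = p.a * q.a := rfl
@[simp] lemma mul_b (p q : AffPair K) : (p * q).b = p.b + (p.a : K) * q.b := rfl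
@[simp] lemma one_a : (1 : AffPair K).a = 1 := rfl
@[simp] lemma one_b : (1 : AffPair K).b = 0 := rfl
@[simp] lemma inv_a (p : AffPair K) : (p⁻¹).a = p.a⁻¹ := rfl
@[simp] lemma inv_b (p : AffPair K) : (p⁻¹).b = -(((p.a⁻¹ : Kˣ) : K) * p.b) := rfl

instance : Group (AffPair K) where
  mul_assoc p q r := by
    ext
    · simp [mul_assoc]
    · simp [mul_add, mul_assoc, add_assoc]
  one_mul p := by ext <;> simp
  mul_one p := by ext <;> simp
  inv_mul_cancel p := by
    ext
    · simp
    · simp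

end AffPair

/-- The subgroup `P_𝒪⁺ ⊆ P_K⁺` of affine transformations whose linear coefficient is a
totally positive unit of the ring of integers and whose translation part is an algebraic
integer, viewed as a subset of the affine group. -/
def GammaSet (K : Type*) [Field K] : Set (AffPair K) :=
  {p | TotallyPositive K (p.a : K) ∧ IsIntegral ℤ ((p.a : K)) ∧
    IsIntegral ℤ (((p.a⁻¹ : Kˣ) : K)) ∧ IsIntegral ℤ p.b}

/-- The double coset `Γ g Γ` where `Γ = P_𝒪⁺`. -/
def doubleCoset (K : Type*) [Field K] (g : AffPair K) : Set (AffPair K) :=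
  {h | ∃ γ₁ ∈ GammaSet K, ∃ γ₂ ∈ GammaSet K, h = γ₁ * g * γ₂}

/-- The collection of left cosets `hΓ` with `h ∈ ΓgΓ`. -/
def leftCosetsIn (K : Type*) [Field K] (g : AffPair K) : Set (Set (AffPair K)) :=
  {C | ∃ h ∈ doubleCoset K g, C = (fun γ => h * γ) '' GammaSet K}

/-- The collection of right cosets `Γh` with `h ∈ ΓgΓ`. -/
def rightCosetsIn (K : Type*) [Field K] (g : AffPair K) : Set (Set (AffPair K)) :=
  {C | ∃ h ∈ doubleCoset K g, C = (fun γ => γ * h) '' GammaSet K}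

/-!
Every conjugate `gΓg⁻¹` of `Γ = P_𝒪⁺` is commensurable with `Γ`. Indeed, let `c` be a nonzero
integer with `c a⁻¹` and `c a⁻¹ b` integral, where `g = (a, b)`. If `γ, γ' ∈ Γ` agree modulo `c`
then `g⁻¹ γ⁻¹ γ' g ∈ Γ`, so `Γ ∩ gΓg⁻¹` has index at most `|𝒪/c|²` in `Γ`. The left cosets of `Γ`
in `ΓgΓ` are the `γgΓ`, indexed by `Γ/(Γ ∩ gΓg⁻¹)`; inversion turns the right cosets in `ΓgΓ`
into the left cosets in `Γg⁻¹Γ`.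
-/

open scoped Pointwise

namespace Subgroup

variable {G : Type*} [Group G] {H N : Subgroup G}

theorem relIndex_ne_zero_of_eq_imp_inv_mul_mem {Q : Type*} [Finite Q] (φ : H → Q)
    (hφ : ∀ x y : H, φ x = φ y → (x⁻¹ * y : G) ∈ N) : N.relIndex H ≠ 0 := by
  rw [relIndex, index_ne_zero_iff_finite]
  refine Finite.of_injective (fun q : H ⧸ N.subgroupOf H => φ q.out) fun q q' h => ?_
  rw [← QuotientGroup.out_eq' q, ← QuotientGroup.out_eq' q', QuotientGroup.eq, mem_subgroupOf]
  exact hφ _ _ h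

theorem mem_conj_smul_iff {g x : G} : x ∈ ConjAct.toConjAct g • H ↔ g⁻¹ * x * g ∈ H := by
  rw [mem_pointwise_smul_iff_inv_smul_mem, ConjAct.smul_def]
  simp

theorem finite_leftCosets_doubleCoset {g : G} (hg : (ConjAct.toConjAct g • H).relIndex H ≠ 0) :
    {C : Set G | ∃ x ∈ DoubleCoset.doubleCoset g H H, C = x • (H : Set G)}.Finite := by
  set N := (ConjAct.toConjAct g • H).subgroupOf H
  have : N.FiniteIndex := ⟨hg⟩
  let cosetOf : H ⧸ N → Set G := Quotient.lift (fun h : H => ((h : G) * g) • (H : Set G))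
    fun a b hab => by
      have hab := mem_conj_smul_iff.mp (mem_subgroupOf.mp (QuotientGroup.leftRel_apply.mp hab))
      simpa [leftCoset_eq_iff, mul_assoc] using hab
  refine (Set.finite_range cosetOf).subset ?_
  rintro C ⟨x, hx, rfl⟩
  obtain ⟨h, hh, k, hk, rfl⟩ := DoubleCoset.mem_doubleCoset.1 hx
  exact ⟨QuotientGroup.mk ⟨h, hh⟩, by rw [mul_smul, mul_smul, smul_coe_set hk, ← mul_smul]; rfl⟩

theorem finite_rightCosets_doubleCoset {g : G}
    (hg : (ConjAct.toConjAct g⁻¹ • H).relIndex H ≠ 0) :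
    {C : Set G | ∃ x ∈ DoubleCoset.doubleCoset g H H,
      C = MulOpposite.op x • (H : Set G)}.Finite := by
  refine ((finite_leftCosets_doubleCoset hg).image Inv.inv).subset ?_
  rintro C ⟨x, hx, rfl⟩
  obtain ⟨h, hh, k, hk, rfl⟩ := DoubleCoset.mem_doubleCoset.1 hx
  have hx' : k⁻¹ * g⁻¹ * h⁻¹ ∈ DoubleCoset.doubleCoset g⁻¹ H H :=
    DoubleCoset.mem_doubleCoset.2 ⟨k⁻¹, inv_mem hk, h⁻¹, inv_mem hh, rfl⟩
  refine ⟨(k⁻¹ * g⁻¹ * h⁻¹) • (H : Set G), ⟨_, hx', rfl⟩, ?_⟩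
  simp [inv_coe_set, mul_assoc]

end Subgroup

namespace AffPair

variable {K : Type*} [Field K]

theorem inv_mul_a (x y : AffPair K) : ((x⁻¹ * y).a : K) = (x.a : K)⁻¹ * y.a := by simp

theorem inv_mul_b (x y : AffPair K) : (x⁻¹ * y).b = (x.a : K)⁻¹ * (y.b - x.b) := by
  simp only [mul_b, inv_b, inv_a, Units.val_inv_eq_inv_val]
  ring

theorem conj_a (g p : AffPair K) : (g⁻¹ * p * g).a = p.a := by
  simp [mul_comm]

theorem conj_b (g p : AffPair K) :
    (g⁻¹ * p * g).b = (g.a : K)⁻¹ * (p.b + (p.a - 1) * g.b) := by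
  simp only [mul_b, mul_a, inv_b, inv_a, Units.val_mul, Units.val_inv_eq_inv_val]
  ring

end AffPair

section GammaSubgroup

open NumberField

variable {K : Type*} [Field K]

theorem TotallyPositive.mul {x y : K} (hx : TotallyPositive K x) (hy : TotallyPositive K y) :
    TotallyPositive K (x * y) :=
  fun φ => by rw [map_mul]; exact mul_pos (hx φ) (hy φ)

theorem TotallyPositive.inv {x : K} (hx : TotallyPositive K x) : TotallyPositive K x⁻¹ :=
  fun φ => by rw [map_inv₀]; exact inv_pos.2 (hx φ)

variable (K) in
def gammaSubgroup : Subgroup (AffPair K) where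
  carrier := GammaSet K
  one_mem' :=
    ⟨fun φ => by simp, by simp [isIntegral_one], by simp [isIntegral_one], isIntegral_zero⟩
  mul_mem' := by
    rintro p q ⟨hp, hpa, hpa', hpb⟩ ⟨hq, hqa, hqa', hqb⟩
    refine ⟨?_, ?_, ?_, hpb.add (hpa.mul hqb)⟩
    · simpa using hp.mul hq
    · simpa using hpa.mul hqa
    · simpa [mul_comm] using hpa'.mul hqa'
  inv_mem' := by
    rintro p ⟨hp, hpa, hpa', hpb⟩
    refine ⟨?_, by simpa using hpa', by simpa using hpa, (hpa'.mul hpb).neg⟩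
    simpa using hp.inv

theorem conj_inv_mul_mem_gammaSubgroup {c : K} {g x y : AffPair K}
    (hga : IsIntegral ℤ (c * (g.a : K)⁻¹)) (hgb : IsIntegral ℤ (c * (g.a : K)⁻¹ * g.b))
    (hx : x ∈ gammaSubgroup K) (hy : y ∈ gammaSubgroup K)
    (ha : ∃ r : 𝓞 K, (y.a - x.a : K) = c * r) (hb : ∃ r : 𝓞 K, y.b - x.b = c * r) :
    g⁻¹ * (x⁻¹ * y) * g ∈ gammaSubgroup K := by
  obtain ⟨ra, hra⟩ := ha
  obtain ⟨rb, hrb⟩ := hb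
  have hxy := mul_mem (inv_mem hx) hy
  have hxa : IsIntegral ℤ (x.a : K)⁻¹ := by simpa using hx.2.2.1
  refine ⟨?_, ?_, ?_, ?_⟩
  · simpa only [AffPair.conj_a] using hxy.1
  · simpa only [AffPair.conj_a] using hxy.2.1
  · simpa only [AffPair.conj_a] using hxy.2.2.1
  · have hb : (g⁻¹ * (x⁻¹ * y) * g).b =
        (x.a : K)⁻¹ * ((c * (g.a : K)⁻¹) * rb + (c * (g.a : K)⁻¹ * g.b) * ra) := by
      have hx0 : (x.a : K)⁻¹ * x.a = 1 := inv_mul_cancel₀ x.a.ne_zero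
      rw [AffPair.conj_b, AffPair.inv_mul_a, AffPair.inv_mul_b]
      linear_combination (g.a : K)⁻¹ * (x.a : K)⁻¹ * hrb + (g.a : K)⁻¹ * g.b * (x.a : K)⁻¹ * hra
        + (g.a : K)⁻¹ * g.b * hx0
    rw [hb]
    exact hxa.mul ((hga.mul (RingOfIntegers.isIntegral_coe rb)).add
      (hgb.mul (RingOfIntegers.isIntegral_coe ra)))

def reduceMod (c : 𝓞 K) (p : gammaSubgroup K) :
    (𝓞 K ⧸ Ideal.span {c}) × (𝓞 K ⧸ Ideal.span {c}) :=
  (Ideal.Quotient.mk _ ⟨p.1.a, p.2.2.1⟩, Ideal.Quotient.mk _ ⟨p.1.b, p.2.2.2.2⟩)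

theorem exists_sub_eq_mul_of_mk_eq {c : 𝓞 K} {a b : K}
    {ha : IsIntegral ℤ a} {hb : IsIntegral ℤ b}
    (h : Ideal.Quotient.mk (Ideal.span {c}) ⟨a, ha⟩ = Ideal.Quotient.mk _ ⟨b, hb⟩) :
    ∃ r : 𝓞 K, b - a = c * r := by
  obtain ⟨r, hr⟩ := Ideal.mem_span_singleton.mp (Ideal.Quotient.eq.mp h.symm)
  exact ⟨r, congrArg ((↑) : 𝓞 K → K) hr⟩

theorem relIndex_conj_gammaSubgroup_ne_zero [NumberField K] (g : AffPair K) :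
    (ConjAct.toConjAct g • gammaSubgroup K).relIndex (gammaSubgroup K) ≠ 0 := by
  classical
  obtain ⟨c, hc, hmul⟩ :=
    exists_integral_multiples ℤ ℚ ({(g.a : K)⁻¹, (g.a : K)⁻¹ * g.b} : Finset K)
  have : Finite (𝓞 K ⧸ Ideal.span {(c : 𝓞 K)}) :=
    Ideal.finiteQuotientOfFreeOfNeBot _ (by simpa using hc)
  refine Subgroup.relIndex_ne_zero_of_eq_imp_inv_mul_mem (reduceMod c) fun x y hxy => ?_
  rw [reduceMod, reduceMod, Prod.mk.injEq] at hxy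
  rw [Subgroup.mem_conj_smul_iff]
  refine conj_inv_mul_mem_gammaSubgroup ?_ ?_ x.2 y.2
    (exists_sub_eq_mul_of_mk_eq hxy.1) (exists_sub_eq_mul_of_mk_eq hxy.2)
  · simpa using hmul _ (by simp)
  · simpa [mul_assoc] using hmul _ (by simp)

theorem doubleCoset_eq_doubleCoset_gammaSubgroup (g : AffPair K) :
    doubleCoset K g = DoubleCoset.doubleCoset g (gammaSubgroup K) (gammaSubgroup K) := by
  ext h
  rw [DoubleCoset.mem_doubleCoset]
  rfl

theorem leftCosetsIn_eq (g : AffPair K) : leftCosetsIn K g =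
    {C | ∃ x ∈ DoubleCoset.doubleCoset g (gammaSubgroup K) (gammaSubgroup K),
      C = x • (gammaSubgroup K : Set (AffPair K))} := by
  rw [leftCosetsIn, doubleCoset_eq_doubleCoset_gammaSubgroup]
  rfl

theorem rightCosetsIn_eq (g : AffPair K) : rightCosetsIn K g =
    {C | ∃ x ∈ DoubleCoset.doubleCoset g (gammaSubgroup K) (gammaSubgroup K),
      C = MulOpposite.op x • (gammaSubgroup K : Set (AffPair K))} := by
  rw [rightCosetsIn, doubleCoset_eq_doubleCoset_gammaSubgroup]
  rfl

end GammaSubgroup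

theorem heckePair_PK_PO_general (K : Type*) [Field K] [NumberField K]
    (g : AffPair K) :
    (leftCosetsIn K g).Finite ∧ (rightCosetsIn K g).Finite := by
  rw [leftCosetsIn_eq, rightCosetsIn_eq]
  exact ⟨Subgroup.finite_leftCosets_doubleCoset (relIndex_conj_gammaSubgroup_ne_zero g),
    Subgroup.finite_rightCosets_doubleCoset (relIndex_conj_gammaSubgroup_ne_zero g⁻¹)⟩

/-- `(P_K⁺, P_𝒪⁺)` is a Hecke pair: every double coset `ΓgΓ`, for
`g ∈ P_K⁺` (i.e. `g` an affine transformation with totally positive linear coefficient),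
contains only finitely many left cosets and finitely many right cosets of `Γ = P_𝒪⁺`. -/
theorem heckePair_PK_PO (K : Type*) [Field K] [NumberField K]
    (g : AffPair K) (hg : TotallyPositive K (g.a : K)) :
    (leftCosetsIn K g).Finite ∧ (rightCosetsIn K g).Finite :=
  heckePair_PK_PO_general K g
end

section
/- For every g = (x, y) ∈ P_K⁺, writing Γ = P_𝒪⁺, the cardinalities L(g) := |{hΓ : h ∈ ΓgΓ}| and R(g) := |{Γh : h ∈ ΓgΓ}| are finite and satisfy L(g) = N_{K/ℚ}(x) · R(g) as an equality of rational numbers (note N_{K/ℚ}(x) > 0 since x is totally positive); equivalently, the modular function Δ(g) = R(g)/L(g) of the Hecke pair equals N_{K/ℚ}(x)^{-1}. -/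
/-!
Write `g = (x, y)`, `U = 𝒪₊*` and `M = 𝒪 + x𝒪`. An element `h` lies in `ΓgΓ` iff `h.a ∈ xU` and
`h.b ∈ S = Uy + M`. The left coset `hΓ` only depends on `h.b mod x𝒪`, and the right coset `Γh`
only on `(h.a / x)⁻¹ h.b mod 𝒪`; as `S` is stable under `U`, this gives `L(g) = |S / x𝒪|` and
`R(g) = |S / 𝒪|`. Since `S` is a union of classes mod `M`, forming a finite set `T`,
`L(g) = |T| [M : x𝒪]` and `R(g) = |T| [M : 𝒪]`. Both indices are compared through the common
sublattice `νx𝒪` (with `ν, νx ∈ 𝒪`): `[x𝒪 : νx𝒪] = |N(ν)|` and `[𝒪 : νx𝒪] = |N(ν)| |N(x)|`.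
Finally `N(x) > 0`: the norm is the product of `σ x` over the complex embeddings, and grouping
them by infinite place gives positive factors `σ x` (real places) and `|σ x|²` (complex places).
-/

open Pointwise NumberField

theorem Set.natCard_image_eq_of_eq_iff {α β γ : Type*} {f : α → β} {g : α → γ} {s : Set α}
    (h : ∀ a ∈ s, ∀ b ∈ s, f a = f b ↔ g a = g b) : Nat.card (f '' s) = Nat.card (g '' s) := by
  set Z := (fun a => (f a, g a)) '' s
  have hfst : Set.InjOn Prod.fst Z := by
    rintro _ ⟨a, ha, rfl⟩ _ ⟨b, hb, rfl⟩ hab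
    simp only [Prod.mk.injEq] at hab ⊢
    exact ⟨hab, (h a ha b hb).mp hab⟩
  have hsnd : Set.InjOn Prod.snd Z := by
    rintro _ ⟨a, ha, rfl⟩ _ ⟨b, hb, rfl⟩ hab
    simp only [Prod.mk.injEq] at hab ⊢
    exact ⟨(h a ha b hb).mpr hab, hab⟩
  rw [← Set.image_image Prod.fst (fun a => (f a, g a)) s, Nat.card_image_of_injOn hfst,
    ← Nat.card_image_of_injOn hsnd, Set.image_image]

theorem AddMonoidHom.natCard_preimage_of_surjective {G H : Type*} [AddGroup G] [AddGroup H]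
    (f : G →+ H) (hf : Function.Surjective f) (t : Set H) :
    Nat.card (f ⁻¹' t) = Nat.card f.ker * Nat.card t := by
  let e := QuotientAddGroup.quotientKerEquivOfSurjective f hf
  have hpre : f ⁻¹' t = QuotientAddGroup.mk ⁻¹' (e ⁻¹' t) := rfl
  rw [hpre, Nat.card_congr (QuotientAddGroup.preimageMkEquivAddSubgroupProdSet _ _),
    Nat.card_prod, Nat.card_preimage_of_injective e.injective (by simp [e.surjective.range_eq])]

theorem QuotientAddGroup.natCard_image_mk_preimage_mk {G : Type*} [AddCommGroup G]
    {P M : AddSubgroup G} (h : P ≤ M) (T : Set (G ⧸ M)) :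
    Nat.card (QuotientAddGroup.mk '' (QuotientAddGroup.mk ⁻¹' T) : Set (G ⧸ P)) =
      Nat.card T * P.relIndex M := by
  let π : G ⧸ P →+ G ⧸ M := QuotientAddGroup.map P M (AddMonoidHom.id G) h
  have hπ : Function.Surjective π := by
    rintro ⟨z⟩
    exact ⟨QuotientAddGroup.mk z, rfl⟩
  have hker : Nat.card π.ker = P.relIndex M := by
    have hπker : π.ker = M.map (QuotientAddGroup.mk' P) := by
      simpa using QuotientAddGroup.ker_map P M (AddMonoidHom.id G) h
    rw [hπker, ← AddSubgroup.relIndex_ker, QuotientAddGroup.ker_mk']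
  have himage : (QuotientAddGroup.mk '' (QuotientAddGroup.mk ⁻¹' T) : Set (G ⧸ P)) = π ⁻¹' T :=
    Set.image_preimage_eq (π ⁻¹' T) QuotientAddGroup.mk_surjective
  rw [himage, π.natCard_preimage_of_surjective hπ, hker, mul_comm]

open InfinitePlace ComplexEmbedding in
open scoped ComplexOrder in
theorem TotallyPositive.norm_pos {K : Type*} [Field K] [NumberField K] {x : K}
    (hx : TotallyPositive K x) (hx0 : x ≠ 0) : 0 < Algebra.norm ℚ x := by
  classical
  have hfiber (w : InfinitePlace K) : 0 < ∏ φ ∈ {φ | mk φ = w}, φ x := by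
    have hfib : ({φ | mk φ = w} : Finset (K →+* ℂ)) = {w.embedding, conjugate w.embedding} := by
      ext φ
      rw [Finset.mem_filter, Finset.mem_insert, Finset.mem_singleton, ← mk_embedding w,
        mk_eq_iff, mk_embedding, (involutive_conjugate K).eq_iff]
      simp
    rw [hfib]
    by_cases hw : ComplexEmbedding.IsReal w.embedding
    · rw [ComplexEmbedding.isReal_iff.mp hw, Finset.pair_eq_singleton, Finset.prod_singleton,
        ← hw.coe_embedding_apply, Complex.zero_lt_real]
      exact hx _
    · have hne : w.embedding ≠ conjugate w.embedding := fun h =>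
        hw (ComplexEmbedding.isReal_iff.mpr h.symm)
      rw [Finset.prod_pair hne, conjugate_coe_eq, Complex.mul_conj, Complex.zero_lt_real,
        Complex.normSq_pos]
      exact map_ne_zero_iff _ w.embedding.injective |>.mpr hx0
  have hprod : (0 : ℂ) < ∏ φ : K →+* ℂ, φ x := by
    rw [← Finset.prod_fiberwise Finset.univ mk]
    exact Finset.prod_pos fun w _ => hfiber w
  have hnorm : algebraMap ℚ ℂ (Algebra.norm ℚ x) = ∏ φ : K →+* ℂ, φ x := by
    rw [Algebra.norm_eq_prod_embeddings ℚ ℂ x]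
    exact Fintype.prod_equiv (RingHom.equivRatAlgHom K ℂ).symm _ _ (fun _ => rfl)
  rw [← hnorm, eq_ratCast, ← Complex.ofReal_ratCast, Complex.zero_lt_real] at hprod
  exact_mod_cast hprod

section Integers

variable {K : Type*} [Field K]

variable (K) in
def integers : AddSubgroup K :=
  (integralClosure ℤ K).toSubring.toAddSubgroup

theorem mem_units_smul_iff_inv_mul_mem {c : Kˣ} {S : AddSubgroup K} {z : K} :
    z ∈ c • S ↔ ((c⁻¹ : Kˣ) : K) * z ∈ S :=
  AddSubgroup.mem_pointwise_smul_iff_inv_smul_mem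

theorem smul_integers_le_integers {c : Kˣ} (hc : IsIntegral ℤ (c : K)) :
    c • integers K ≤ integers K := by
  rintro _ ⟨a, ha, rfl⟩
  exact hc.mul ha

theorem mul_smul_integers_le_smul_integers {ν x : Kˣ} (hν : IsIntegral ℤ (ν : K)) :
    (ν * x) • integers K ≤ x • integers K := by
  rw [mul_comm, mul_smul]
  exact AddSubgroup.pointwise_smul_le_pointwise_smul_iff.mpr (smul_integers_le_integers hν)

theorem relIndex_mul_smul_smul (ν x : Kˣ) (S : AddSubgroup K) :
    ((ν * x) • S).relIndex (x • S) = (ν • S).relIndex S := by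
  rw [mul_comm, mul_smul]
  exact AddSubgroup.relIndex_pointwise_smul x _ _

theorem mul_mem_smul_integers (x : Kˣ) {a : K} (ha : a ∈ integers K) :
    (x : K) * a ∈ x • integers K := by
  rw [mem_units_smul_iff_inv_mul_mem, ← mul_assoc, Units.inv_mul, one_mul]
  exact ha

variable (K) in
def totallyPositiveUnits : Subgroup Kˣ where
  carrier := {u | TotallyPositive K u ∧ IsIntegral ℤ (u : K) ∧ IsIntegral ℤ ((u⁻¹ : Kˣ) : K)}
  one_mem' := ⟨fun φ => by simp, by simpa using isIntegral_one, by simpa using isIntegral_one⟩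
  mul_mem' := by
    rintro u v ⟨hu, hu₁, hu₂⟩ ⟨hv, hv₁, hv₂⟩
    refine ⟨fun φ => ?_, by simpa using hu₁.mul hv₁, by simpa [mul_comm] using hu₂.mul hv₂⟩
    simpa using mul_pos (hu φ) (hv φ)
  inv_mem' := by
    rintro u ⟨hu, hu₁, hu₂⟩
    refine ⟨fun φ => ?_, hu₂, by simpa using hu₁⟩
    simpa using hu φ

theorem mul_mem_integers_iff {u : Kˣ} (hu : u ∈ totallyPositiveUnits K) {a : K} :
    (u : K) * a ∈ integers K ↔ a ∈ integers K := by
  refine ⟨fun h => ?_, hu.2.1.mul⟩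
  have := hu.2.2.mul h
  rwa [← mul_assoc, Units.inv_mul, one_mul] at this

def integersSupSmul (x : Kˣ) : AddSubgroup K := integers K ⊔ x • integers K

theorem mul_mem_integersSupSmul {u : Kˣ} (hu : u ∈ totallyPositiveUnits K) {x : Kˣ} {m : K}
    (hm : m ∈ integersSupSmul x) : (u : K) * m ∈ integersSupSmul x := by
  obtain ⟨a, ha, b, hb, rfl⟩ := AddSubgroup.mem_sup.mp hm
  rw [mul_add]
  refine add_mem (AddSubgroup.mem_sup_left ((mul_mem_integers_iff hu).mpr ha))
    (AddSubgroup.mem_sup_right (mem_units_smul_iff_inv_mul_mem.mpr ?_))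
  rw [mul_left_comm]
  exact (mul_mem_integers_iff hu).mpr (mem_units_smul_iff_inv_mul_mem.mp hb)

section NumberField

variable [NumberField K]

theorem exists_integral_unit_mul_integral (z : K) :
    ∃ ν : Kˣ, IsIntegral ℤ (ν : K) ∧ IsIntegral ℤ ((ν : K) * z) := by
  obtain ⟨n, hn, hnz⟩ := ((IsFractionRing.isAlgebraic_iff ℤ ℚ K).mpr
    (Algebra.IsAlgebraic.isAlgebraic z)).exists_integral_multiple
  refine ⟨Units.mk0 (n : K) (Int.cast_ne_zero.mpr hn), ?_, by simpa [zsmul_eq_mul] using hnz⟩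
  simpa using (isIntegral_algebraMap (R := ℤ) (x := n) : IsIntegral ℤ (algebraMap ℤ K n))

theorem relIndex_smul_integers {c : Kˣ} (hc : IsIntegral ℤ (c : K)) :
    ((c • integers K).relIndex (integers K) : ℚ) = |Algebra.norm ℚ (c : K)| := by
  let f : 𝓞 K →+ K := (algebraMap (𝓞 K) K).toAddMonoidHom
  have hrange : f.range = integers K := by
    ext a
    exact ⟨by rintro ⟨z, rfl⟩; exact z.2, fun ha => ⟨⟨a, ha⟩, rfl⟩⟩
  let c₀ : 𝓞 K := ⟨c, hc⟩
  have hcomap : (c • integers K).comap f = (Ideal.span {c₀}).toAddSubgroup := by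
    ext z
    rw [AddSubgroup.mem_comap, mem_units_smul_iff_inv_mul_mem,
      Submodule.mem_toAddSubgroup, Ideal.mem_span_singleton]
    constructor
    · intro hz
      refine ⟨⟨_, hz⟩, Subtype.ext ?_⟩
      change (z : K) = c * (((c⁻¹ : Kˣ) : K) * z)
      rw [← mul_assoc, Units.mul_inv, one_mul]
    · rintro ⟨d, rfl⟩
      change IsIntegral ℤ (((c⁻¹ : Kˣ) : K) * (c * d))
      rw [← mul_assoc, Units.inv_mul, one_mul]
      exact d.2
  have hindex := AddSubgroup.index_comap (c • integers K) f
  rw [hrange] at hindex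
  rw [← hindex, hcomap, ← Submodule.cardQuot, ← Ideal.absNorm_apply,
    Ideal.absNorm_span_singleton, Nat.cast_natAbs, Int.cast_abs, Algebra.coe_norm_int]
  rfl

theorem relIndex_smul_integers_ne_zero {c : Kˣ} (hc : IsIntegral ℤ (c : K)) :
    (c • integers K).relIndex (integers K) ≠ 0 := by
  intro h
  have hnorm := relIndex_smul_integers hc
  rw [h, Nat.cast_zero, eq_comm, abs_eq_zero, Algebra.norm_eq_zero_iff] at hnorm
  exact c.ne_zero hnorm

theorem relIndex_integersSupSmul_ne_zero (x : Kˣ) :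
    (integers K).relIndex (integersSupSmul x) ≠ 0 := by
  obtain ⟨ν, hν, hνx⟩ := exists_integral_unit_mul_integral (x : K)
  have hC : ((ν * x) • integers K).relIndex (x • integers K) ≠ 0 := by
    rw [relIndex_mul_smul_smul]
    exact relIndex_smul_integers_ne_zero hν
  rw [integersSupSmul, AddSubgroup.relIndex_sup_left]
  exact mt (AddSubgroup.relIndex_eq_zero_of_le_left (smul_integers_le_integers hνx)) hC

theorem relIndex_smul_integers_integersSupSmul (x : Kˣ) :
    ((x • integers K).relIndex (integersSupSmul x) : ℚ) =
      |Algebra.norm ℚ (x : K)| * (integers K).relIndex (integersSupSmul x) := by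
  obtain ⟨ν, hν, hνx⟩ := exists_integral_unit_mul_integral (x : K)
  have hνx' : IsIntegral ℤ ((ν * x : Kˣ) : K) := hνx
  have hchain := (AddSubgroup.relIndex_mul_relIndex _ _ _ (mul_smul_integers_le_smul_integers hν)
    le_sup_right).trans (AddSubgroup.relIndex_mul_relIndex _ _ _
      (smul_integers_le_integers hνx') le_sup_left).symm
  rw [relIndex_mul_smul_smul] at hchain
  have hchainℚ := congrArg (Nat.cast : ℕ → ℚ) hchain
  push_cast at hchainℚ
  rw [relIndex_smul_integers hν, relIndex_smul_integers hνx', Units.val_mul, map_mul, abs_mul,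
    mul_assoc] at hchainℚ
  have hν0 : |Algebra.norm ℚ (ν : K)| ≠ 0 := by
    rw [abs_ne_zero, Ne, Algebra.norm_eq_zero_iff]
    exact ν.ne_zero
  exact mul_left_cancel₀ hν0 hchainℚ

end NumberField

end Integers

namespace AffPair

variable {K : Type*} [Field K]

theorem mem_gammaSet_iff {p : AffPair K} :
    p ∈ GammaSet K ↔ p.a ∈ totallyPositiveUnits K ∧ p.b ∈ integers K :=
  ⟨fun ⟨h₁, h₂, h₃, h₄⟩ => ⟨⟨h₁, h₂, h₃⟩, h₄⟩, fun ⟨⟨h₁, h₂, h₃⟩, h₄⟩ => ⟨h₁, h₂, h₃, h₄⟩⟩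

variable (K) in
def gamma : Subgroup (AffPair K) where
  carrier := GammaSet K
  one_mem' := mem_gammaSet_iff.mpr ⟨one_mem _, zero_mem _⟩
  mul_mem' := by
    intro p q hp hq
    rw [mem_gammaSet_iff] at hp hq ⊢
    exact ⟨mul_mem hp.1 hq.1, add_mem hp.2 ((mul_mem_integers_iff hp.1).mpr hq.2)⟩
  inv_mem' := by
    intro p hp
    rw [mem_gammaSet_iff] at hp ⊢
    exact ⟨inv_mem hp.1, neg_mem ((mul_mem_integers_iff (inv_mem hp.1)).mpr hp.2)⟩

theorem mem_gamma_iff {p : AffPair K} :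
    p ∈ gamma K ↔ p.a ∈ totallyPositiveUnits K ∧ p.b ∈ integers K :=
  mem_gammaSet_iff

def translationClasses (g : AffPair K) : Set (K ⧸ integersSupSmul g.a) :=
  (fun u : Kˣ => ((u * g.b : K) : K ⧸ integersSupSmul g.a)) '' totallyPositiveUnits K

theorem mem_doubleCoset_iff {g h : AffPair K} :
    h ∈ doubleCoset K g ↔ g.a⁻¹ * h.a ∈ totallyPositiveUnits K ∧
      (h.b : K ⧸ integersSupSmul g.a) ∈ translationClasses g := by
  constructor
  · rintro ⟨γ₁, hγ₁, γ₂, hγ₂, rfl⟩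
    obtain ⟨hu₁, hb₁⟩ := mem_gammaSet_iff.mp hγ₁
    obtain ⟨hu₂, hb₂⟩ := mem_gammaSet_iff.mp hγ₂
    refine ⟨?_, γ₁.a, hu₁, QuotientAddGroup.eq.mpr ?_⟩
    · rw [mul_a, mul_a, mul_comm γ₁.a, mul_assoc, inv_mul_cancel_left]
      exact mul_mem hu₁ hu₂
    · have hb : -(γ₁.a * g.b) + (γ₁ * g * γ₂).b = γ₁.b + g.a * (γ₁.a * γ₂.b) := by
        simp only [mul_b, mul_a, Units.val_mul]
        ring
      rw [hb]
      exact add_mem (AddSubgroup.mem_sup_left hb₁) (AddSubgroup.mem_sup_right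
        (mul_mem_smul_integers _ ((mul_mem_integers_iff hu₁).mpr hb₂)))
  · rintro ⟨hw, u, hu, hmk⟩
    obtain ⟨p, hp, q, hq, hpq⟩ := AddSubgroup.mem_sup.mp (QuotientAddGroup.eq.mp hmk)
    refine ⟨⟨u, p⟩, mem_gammaSet_iff.mpr ⟨hu, hp⟩, ⟨u⁻¹ * (g.a⁻¹ * h.a), u⁻¹ * (g.a⁻¹ * q)⟩,
      mem_gammaSet_iff.mpr ⟨mul_mem (inv_mem hu) hw,
        (mul_mem_integers_iff (inv_mem hu)).mpr (mem_units_smul_iff_inv_mul_mem.mp hq)⟩, ?_⟩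
    ext
    · simp only [mul_a]
      rw [mul_comm u, mul_assoc, mul_inv_cancel_left, mul_inv_cancel_left]
    · simp only [mul_b, mul_a, Units.val_mul]
      rw [mul_assoc, mul_left_comm (u : K), Units.mul_inv_cancel_left, Units.mul_inv_cancel_left]
      linear_combination -hpq

theorem units_mul_mem_translationClasses {g : AffPair K} {u : Kˣ} (hu : u ∈ totallyPositiveUnits K)
    {c : K} (hc : (c : K ⧸ integersSupSmul g.a) ∈ translationClasses g) :
    ((u * c : K) : K ⧸ integersSupSmul g.a) ∈ translationClasses g := by
  obtain ⟨v, hv, hvc⟩ := hc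
  refine ⟨u * v, mul_mem hu hv, QuotientAddGroup.eq.mpr ?_⟩
  have hm := mul_mem_integersSupSmul hu (QuotientAddGroup.eq.mp hvc)
  rwa [Units.val_mul, mul_assoc, ← mul_neg, ← mul_add]

theorem mk_mem_doubleCoset (g : AffPair K) {c : K}
    (hc : (c : K ⧸ integersSupSmul g.a) ∈ translationClasses g) :
    (⟨g.a, c⟩ : AffPair K) ∈ doubleCoset K g :=
  mem_doubleCoset_iff.mpr ⟨by rw [inv_mul_cancel]; exact one_mem _, hc⟩

theorem image_b_doubleCoset (g : AffPair K) :
    AffPair.b '' doubleCoset K g = QuotientAddGroup.mk ⁻¹' translationClasses g := by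
  ext c
  refine ⟨?_, fun hc => ⟨_, mk_mem_doubleCoset g hc, rfl⟩⟩
  rintro ⟨h, hh, rfl⟩
  exact (mem_doubleCoset_iff.mp hh).2

theorem image_inv_mul_b_doubleCoset (g : AffPair K) :
    (fun h : AffPair K => (((g.a⁻¹ * h.a)⁻¹ : Kˣ) : K) * h.b) '' doubleCoset K g =
      QuotientAddGroup.mk ⁻¹' translationClasses g := by
  ext c
  constructor
  · rintro ⟨h, hh, rfl⟩
    obtain ⟨hw, hb⟩ := mem_doubleCoset_iff.mp hh
    exact units_mul_mem_translationClasses (inv_mem hw) hb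
  · intro hc
    exact ⟨_, mk_mem_doubleCoset g hc, by simp⟩

theorem inv_mul_mem_gamma_iff {g h h' : AffPair K} (hh : g.a⁻¹ * h.a ∈ totallyPositiveUnits K)
    (hh' : g.a⁻¹ * h'.a ∈ totallyPositiveUnits K) :
    h⁻¹ * h' ∈ gamma K ↔ (h.b : K ⧸ g.a • integers K) = h'.b := by
  have ha : (h⁻¹ * h').a = (g.a⁻¹ * h.a)⁻¹ * (g.a⁻¹ * h'.a) := by
    rw [mul_a, inv_a, mul_inv_rev, inv_inv, mul_assoc, mul_inv_cancel_left]
  have hb : (h⁻¹ * h').b = (((g.a⁻¹ * h.a)⁻¹ : Kˣ) : K) * (((g.a⁻¹ : Kˣ) : K) * (-h.b + h'.b)) := by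
    simp only [mul_b, inv_b, inv_a, mul_inv_rev, inv_inv, Units.val_mul, Units.val_inv_eq_inv_val]
    field_simp
  rw [mem_gamma_iff, ha, hb, QuotientAddGroup.eq, mem_units_smul_iff_inv_mul_mem,
    mul_mem_integers_iff (inv_mem hh)]
  exact and_iff_right (mul_mem (inv_mem hh) hh')

theorem mul_inv_mem_gamma_iff {g h h' : AffPair K} (hh : g.a⁻¹ * h.a ∈ totallyPositiveUnits K)
    (hh' : g.a⁻¹ * h'.a ∈ totallyPositiveUnits K) :
    h' * h⁻¹ ∈ gamma K ↔ (((((g.a⁻¹ * h.a)⁻¹ : Kˣ) : K) * h.b : K) : K ⧸ integers K) =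
      (((g.a⁻¹ * h'.a)⁻¹ : Kˣ) : K) * h'.b := by
  have ha : (h' * h⁻¹).a = (g.a⁻¹ * h'.a) * (g.a⁻¹ * h.a)⁻¹ := by
    rw [mul_a, inv_a, mul_inv_rev, inv_inv, mul_comm h.a⁻¹ g.a,
      mul_comm g.a⁻¹ h'.a, mul_assoc, inv_mul_cancel_left]
  have hb : (h' * h⁻¹).b = ((g.a⁻¹ * h'.a : Kˣ) : K) * (-((((g.a⁻¹ * h.a)⁻¹ : Kˣ) : K) * h.b) +
      (((g.a⁻¹ * h'.a)⁻¹ : Kˣ) : K) * h'.b) := by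
    simp only [mul_b, inv_b, mul_inv_rev, inv_inv, Units.val_mul, Units.val_inv_eq_inv_val]
    field_simp
    ring
  rw [mem_gamma_iff, ha, hb, QuotientAddGroup.eq, mul_mem_integers_iff hh']
  exact and_iff_right (mul_mem hh' (inv_mem hh))

theorem natCard_leftCosetsIn (g : AffPair K) :
    Nat.card (leftCosetsIn K g) =
      Nat.card (translationClasses g) * (g.a • integers K).relIndex (integersSupSmul g.a) := by
  have hL : leftCosetsIn K g = (fun h => h • (gamma K : Set (AffPair K))) '' doubleCoset K g :=
    Set.ext fun _ => exists_congr fun _ => and_congr_right fun _ => eq_comm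
  rw [hL, Set.natCard_image_eq_of_eq_iff (g := fun h => (h.b : K ⧸ g.a • integers K)),
    ← Set.image_image _ AffPair.b, image_b_doubleCoset]
  · exact QuotientAddGroup.natCard_image_mk_preimage_mk le_sup_right _
  intro h hh h' hh'
  rw [leftCoset_eq_iff, inv_mul_mem_gamma_iff (mem_doubleCoset_iff.mp hh).1
    (mem_doubleCoset_iff.mp hh').1]

theorem natCard_rightCosetsIn (g : AffPair K) :
    Nat.card (rightCosetsIn K g) =
      Nat.card (translationClasses g) * (integers K).relIndex (integersSupSmul g.a) := by
  have hR : rightCosetsIn K g =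
      (fun h => MulOpposite.op h • (gamma K : Set (AffPair K))) '' doubleCoset K g :=
    Set.ext fun _ => exists_congr fun _ => and_congr_right fun _ => eq_comm
  rw [hR, Set.natCard_image_eq_of_eq_iff
      (g := fun h => (((((g.a⁻¹ * h.a)⁻¹ : Kˣ) : K) * h.b : K) : K ⧸ integers K)),
    ← Set.image_image _ (fun h : AffPair K => (((g.a⁻¹ * h.a)⁻¹ : Kˣ) : K) * h.b),
    image_inv_mul_b_doubleCoset]
  · exact QuotientAddGroup.natCard_image_mk_preimage_mk le_sup_left _
  intro h hh h' hh'
  rw [rightCoset_eq_iff, mul_inv_mem_gamma_iff (mem_doubleCoset_iff.mp hh).1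
    (mem_doubleCoset_iff.mp hh').1]

theorem translationClasses_finite [NumberField K] (g : AffPair K) :
    (translationClasses g).Finite := by
  obtain ⟨ν, hν, hνb⟩ := exists_integral_unit_mul_integral g.b
  let ψ : K →+ K ⧸ integersSupSmul g.a :=
    (QuotientAddGroup.mk' _).comp (AddMonoidHom.mulRight g.b)
  have hker : ν • integers K ≤ ψ.ker := by
    intro a ha
    rw [AddMonoidHom.mem_ker]
    refine (QuotientAddGroup.eq_zero_iff _).mpr (AddSubgroup.mem_sup_left ?_)
    have hab : a * g.b = ((ν : K) * g.b) * (((ν⁻¹ : Kˣ) : K) * a) := by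
      rw [mul_mul_mul_comm, mul_comm, ← mul_assoc, Units.mul_inv, one_mul]
    change a * g.b ∈ integers K
    rw [hab]
    exact hνb.mul (mem_units_smul_iff_inv_mul_mem.mp ha)
  have hfin := mt (AddSubgroup.relIndex_eq_zero_of_le_left hker) (relIndex_smul_integers_ne_zero hν)
  rw [AddSubgroup.relIndex_ker] at hfin
  have := Nat.finite_of_card_ne_zero hfin
  refine (Set.toFinite ((integers K).map ψ : Set _)).subset ?_
  rintro _ ⟨u, hu, rfl⟩
  exact ⟨u, hu.2.1, rfl⟩

theorem translationClasses_nonempty (g : AffPair K) : (translationClasses g).Nonempty :=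
  ⟨_, 1, one_mem _, rfl⟩

end AffPair

open AffPair in
/-- For every `g = (x, y) ∈ P_K⁺`, the number `L(g)` of left cosets and the
number `R(g)` of right cosets of `Γ = P_𝒪⁺` contained in the double coset `ΓgΓ` are finite and
satisfy `L(g) = N_{K/ℚ}(x) · R(g)` as rational numbers; equivalently, the modular function
`Δ(g) = R(g)/L(g)` equals `N_{K/ℚ}(x)⁻¹`. -/
theorem card_leftCosets_eq_norm_mul_card_rightCosets (K : Type*) [Field K] [NumberField K]
    (g : AffPair K) (hg : TotallyPositive K (g.a : K)) :
    (leftCosetsIn K g).Finite ∧ (rightCosetsIn K g).Finite ∧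
      (Nat.card ↥(leftCosetsIn K g) : ℚ) =
        Algebra.norm ℚ ((g.a : K)) * (Nat.card ↥(rightCosetsIn K g) : ℚ) := by
  have hnorm := hg.norm_pos g.a.ne_zero
  have hindex := relIndex_smul_integers_integersSupSmul g.a
  rw [abs_of_pos hnorm] at hindex
  have hT : Nat.card (translationClasses g) ≠ 0 :=
    Nat.card_ne_zero.mpr ⟨(translationClasses_nonempty g).to_subtype,
      (translationClasses_finite g).to_subtype⟩
  have hO := relIndex_integersSupSmul_ne_zero g.a
  have hA : (g.a • integers K).relIndex (integersSupSmul g.a) ≠ 0 := by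
    intro h
    rw [h, Nat.cast_zero, eq_comm, mul_eq_zero] at hindex
    exact hindex.elim hnorm.ne' (by exact_mod_cast hO)
  -- `Nat.card` vanishes on infinite types, so nonzero counts give finiteness.
  refine ⟨Set.finite_coe_iff.mp (Nat.finite_of_card_ne_zero ?_),
    Set.finite_coe_iff.mp (Nat.finite_of_card_ne_zero ?_), ?_⟩
  · rw [natCard_leftCosetsIn]
    exact mul_ne_zero hT hA
  · rw [natCard_rightCosetsIn]
    exact mul_ne_zero hT hO
  · rw [natCard_leftCosetsIn, natCard_rightCosetsIn]
    push_cast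
    rw [hindex]
    ring
end

section
/- One has S₀ ⊆ S ∩ S⁻¹ ⊆ ker N, and N(γ) ≥ 1 for every γ ∈ S. Moreover, if for some β ∈ ℝ the family (N(s)^{-β})_{s ∈ S} is summable, then the set S ∩ ker N = {s ∈ S : N(s) = 1} is finite. -/
open Pointwise

/-- The boundary set `Y₀ = Y \ ⋃_{γ : N(γ) > 1} γ·Y` of the cocycle determined by `N`. -/
def boundarySet {Γ X : Type*} [Group Γ] [MulAction Γ X] (N : Γ →* ℝ) (Y : Set X) : Set X :=
  Y \ ⋃ (γ : Γ) (_ : 1 < N γ), γ • Y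

/-- The set `S = {γ ∈ Γ : γ·Y₀ ∩ Y ≠ ∅}`. -/
def Sset {Γ X : Type*} [Group Γ] [MulAction Γ X] (N : Γ →* ℝ) (Y : Set X) : Set Γ :=
  {γ : Γ | ((γ • boundarySet N Y) ∩ Y).Nonempty}

/-- The set `S₀ = {γ ∈ Γ : γ·Y₀ ∩ Y₀ ≠ ∅}`. -/
def S0set {Γ X : Type*} [Group Γ] [MulAction Γ X] (N : Γ →* ℝ) (Y : Set X) : Set Γ :=
  {γ : Γ | ((γ • boundarySet N Y) ∩ boundarySet N Y).Nonempty}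

theorem Summable.finite_setOf_mem_and_eq {α G : Type*} [AddCommGroup G] [TopologicalSpace G]
    [IsTopologicalAddGroup G] [T1Space G] {s : Set α} {f : α → G} {c : G} (hc : c ≠ 0)
    (hf : Summable fun x : s ↦ f x) : {x | x ∈ s ∧ f x = c}.Finite := by
  have hfin : {x : s | f x = c}.Finite := by
    simpa using Filter.eventually_cofinite.mp (hf.tendsto_cofinite_zero.eventually_ne hc.symm)
  exact (hfin.image Subtype.val).subset fun x ⟨hx, hfx⟩ ↦ ⟨⟨x, hx⟩, hfx, rfl⟩

section

variable {Γ X : Type*} [Group Γ] [MulAction Γ X] {N : Γ →* ℝ} {Y : Set X} {γ : Γ}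

theorem mem_Sset_iff : γ ∈ Sset N Y ↔ ∃ y ∈ boundarySet N Y, γ • y ∈ Y := by
  simp only [Sset, Set.mem_ofPred_eq, Set.Nonempty, Set.mem_inter_iff, Set.mem_smul_set]
  exact ⟨fun ⟨_, ⟨y, hy, rfl⟩, hγy⟩ ↦ ⟨y, hy, hγy⟩, fun ⟨y, hy, hγy⟩ ↦ ⟨_, ⟨y, hy, rfl⟩, hγy⟩⟩

theorem mem_S0set_iff : γ ∈ S0set N Y ↔ ∃ y ∈ boundarySet N Y, γ • y ∈ boundarySet N Y := by
  simp only [S0set, Set.mem_ofPred_eq, Set.Nonempty, Set.mem_inter_iff, Set.mem_smul_set]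
  exact ⟨fun ⟨_, ⟨y, hy, rfl⟩, hγy⟩ ↦ ⟨y, hy, hγy⟩, fun ⟨y, hy, hγy⟩ ↦ ⟨_, ⟨y, hy, rfl⟩, hγy⟩⟩

theorem S0set_subset_Sset_inter_inv : S0set N Y ⊆ Sset N Y ∩ (Sset N Y)⁻¹ := by
  intro γ hγ
  obtain ⟨y, hy, hγy⟩ := mem_S0set_iff.mp hγ
  refine ⟨mem_Sset_iff.mpr ⟨y, hy, hγy.1⟩, mem_Sset_iff.mpr ⟨γ • y, hγy, ?_⟩⟩
  simpa using hy.1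

theorem not_one_lt_map_inv_of_smul_mem {y : X} (hy : y ∈ boundarySet N Y) (hγy : γ • y ∈ Y) :
    ¬1 < N γ⁻¹ := fun hlt ↦
  hy.2 <| Set.mem_biUnion (x := γ⁻¹) hlt (Set.mem_smul_set_iff_inv_smul_mem.mpr (by simpa))

theorem one_le_of_mem_Sset (hN : ∀ γ, 0 < N γ) (hγ : γ ∈ Sset N Y) : 1 ≤ N γ := by
  obtain ⟨y, hy, hγy⟩ := mem_Sset_iff.mp hγ
  have := not_lt.mp (not_one_lt_map_inv_of_smul_mem hy hγy)
  rwa [map_inv, inv_le_one₀ (hN γ)] at this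

theorem Sset_inter_inv_subset_ker (hN : ∀ γ, 0 < N γ) :
    Sset N Y ∩ (Sset N Y)⁻¹ ⊆ {γ : Γ | N γ = 1} := by
  rintro γ ⟨hγ, hγinv⟩
  have := one_le_of_mem_Sset hN hγinv
  rw [map_inv, one_le_inv₀ (hN γ)] at this
  exact le_antisymm this (one_le_of_mem_Sset hN hγ)

end

/-- One has `S₀ ⊆ S ∩ S⁻¹ ⊆ ker N` and `N(γ) ≥ 1` for every `γ ∈ S`;
moreover, if for some `β ∈ ℝ` the family `(N(s)^{-β})_{s ∈ S}` is summable, then the set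
`S ∩ ker N = {s ∈ S : N(s) = 1}` is finite. -/
theorem S0_subset_and_finite_ker_inter {Γ X : Type*} [Group Γ] [MulAction Γ X]
    (N : Γ →* ℝ) (hN : ∀ γ, 0 < N γ) (Y : Set X) :
    S0set N Y ⊆ Sset N Y ∩ (Sset N Y)⁻¹ ∧
      Sset N Y ∩ (Sset N Y)⁻¹ ⊆ {γ : Γ | N γ = 1} ∧
      (∀ γ ∈ Sset N Y, 1 ≤ N γ) ∧
      (∀ β : ℝ, Summable (fun s : Sset N Y => N s.1 ^ (-β)) →
        {s : Γ | s ∈ Sset N Y ∧ N s = 1}.Finite) := by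
  refine ⟨S0set_subset_Sset_inter_inv, Sset_inter_inv_subset_ker hN,
    fun γ ↦ one_le_of_mem_Sset hN, fun β hβ ↦ ?_⟩
  exact (hβ.finite_setOf_mem_and_eq (f := fun γ ↦ N γ ^ (-β)) one_ne_zero).subset
    fun s ⟨hs, hNs⟩ ↦ ⟨hs, by simp only [hNs, Real.one_rpow]⟩
end

section
/- Assume the standing hypotheses (i) and (ii), let β be a nonzero real number, and suppose the family (N(s)^{-β})_{s ∈ S} is summable with sum Z. Then every β-scaling Borel probability measure μ on X satisfies μ(Yₙ) = 0 for every n ≥ 1 and μ(Y₀) ≥ 1/Z; in particular μ(Y₀) > 0. -/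
/-!
A scaling measure cannot charge a set `Yₙ` that is fixed by an element `γₙ` with `N(γₙ) ≠ 1`,
since scaling by `γₙ` multiplies its mass by `N(γₙ)^{-β} ≠ 1`. Hence, for every open `U ⊇ Y₀`,
hypothesis (i) covers `Y` up to a null set by the translates `s·(U ∩ Y)`, `s ∈ S`, each of mass at
most `N(s)^{-β} μ(U ∩ Y)`; so `1 = μ(Y) ≤ Z μ(U)`, and outer regularity gives `μ(Y₀) ≥ 1/Z`.
-/

open Pointwise MeasureTheory

/-- A Borel probability measure `μ` on `X` is `β`-scaling if it is concentrated on `Y` and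
`μ(γ·A) = N(γ)^{-β}·μ(A)` for every `γ ∈ Γ` and every Borel set `A ⊆ Y` with `γ·A ⊆ Y`. -/
def IsScaling {Γ X : Type*} [Group Γ] [MulAction Γ X] [MeasurableSpace X]
    (N : Γ →* ℝ) (Y : Set X) (β : ℝ) (μ : Measure X) : Prop :=
  μ Yᶜ = 0 ∧ ∀ (γ : Γ) (A : Set X), MeasurableSet A → A ⊆ Y → γ • A ⊆ Y →
    μ (γ • A) = ENNReal.ofReal (N γ ^ (-β)) * μ A

lemma Real.rpow_ne_one_of_ne_one {x y : ℝ} (hx : 0 < x) (hx1 : x ≠ 1) (hy : y ≠ 0) :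
    x ^ y ≠ 1 := fun h =>
  mul_ne_zero hy (Real.log_ne_zero_of_pos_of_ne_one hx hx1) (by
    rw [← Real.log_rpow hx, h, Real.log_one])

lemma MeasureTheory.Measure.le_of_forall_isOpen_le {X : Type*} [TopologicalSpace X]
    [MeasurableSpace X] (μ : Measure X) [μ.OuterRegular] {A : Set X} {c : ENNReal}
    (h : ∀ U, IsOpen U → A ⊆ U → c ≤ μ U) : c ≤ μ A := by
  rw [Set.measure_eq_iInf_isOpen]
  exact le_iInf₂ fun U hAU => le_iInf fun hU => h U hU hAU

namespace IsScaling

variable {Γ X : Type*} [Group Γ] [MulAction Γ X] [MeasurableSpace X]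
  {N : Γ →* ℝ} {Y : Set X} {β : ℝ} {μ : Measure X}

lemma measure_eq_zero_of_smul_eq [IsFiniteMeasure μ] (hμ : IsScaling N Y β μ)
    (hN : ∀ γ, 0 < N γ) (hβ : β ≠ 0) {γ : Γ} {A : Set X} (hA : MeasurableSet A) (hAY : A ⊆ Y)
    (hγ : N γ ≠ 1) (hγA : γ • A = A) : μ A = 0 := by
  by_contra hA0
  have hscale := hμ.2 γ A hA hAY (hγA.symm ▸ hAY)
  rw [hγA, eq_comm, ENNReal.mul_eq_right hA0 (measure_ne_top μ A), ENNReal.ofReal_eq_one] at hscale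
  exact Real.rpow_ne_one_of_ne_one (hN γ) hγ (neg_ne_zero.2 hβ) hscale

variable [MeasurableConstSMul Γ X]

lemma measure_smul_le (hμ : IsScaling N Y β μ) (hY : MeasurableSet Y) (s : Γ) {V : Set X}
    (hV : MeasurableSet V) (hVY : V ⊆ Y) :
    μ (s • V) ≤ ENNReal.ofReal (N s ^ (-β)) * μ V := by
  have hsA : s • (V ∩ s⁻¹ • Y) = s • V ∩ Y := by rw [Set.smul_set_inter, smul_inv_smul]
  calc μ (s • V) = μ (s • (V ∩ s⁻¹ • Y)) := by rw [hsA, measure_inter_conull hμ.1]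
    _ = ENNReal.ofReal (N s ^ (-β)) * μ (V ∩ s⁻¹ • Y) :=
      hμ.2 s _ (hV.inter (hY.const_smul _)) (Set.inter_subset_left.trans hVY)
        (hsA ▸ Set.inter_subset_right)
    _ ≤ ENNReal.ofReal (N s ^ (-β)) * μ V := by gcongr; exact Set.inter_subset_left

lemma one_le_tsum_mul_measure [IsProbabilityMeasure μ] (hμ : IsScaling N Y β μ)
    (hY : MeasurableSet Y) (T : Set Γ) [Countable T] {V E : Set X} (hV : MeasurableSet V)
    (hVY : V ⊆ Y) (hE : μ E = 0) (hcover : Y ⊆ (⋃ s ∈ T, s • V) ∪ E) :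
    1 ≤ (∑' s : T, ENNReal.ofReal (N s ^ (-β))) * μ V :=
  calc 1 = μ Y := ((prob_compl_eq_zero_iff hY).1 hμ.1).symm
    _ ≤ μ ((⋃ s ∈ T, s • V) ∪ E) := measure_mono hcover
    _ ≤ μ (⋃ s ∈ T, s • V) := (measure_union_le _ _).trans_eq (by rw [hE, add_zero])
    _ ≤ ∑' s : T, μ ((s : Γ) • V) := measure_biUnion_le μ T.to_countable _
    _ ≤ ∑' s : T, ENNReal.ofReal (N s ^ (-β)) * μ V :=
      ENNReal.tsum_le_tsum fun s => hμ.measure_smul_le hY s hV hVY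
    _ = (∑' s : T, ENNReal.ofReal (N s ^ (-β))) * μ V := ENNReal.tsum_mul_right

end IsScaling

theorem scaling_measure_vanishes_on_Yn_and_positive_on_boundary_general
    {Γ X : Type*} [Group Γ] [Countable Γ]
    [TopologicalSpace X] [LocallyCompactSpace X] [SecondCountableTopology X] [T2Space X]
    [MeasurableSpace X] [BorelSpace X] [MulAction Γ X] [ContinuousConstSMul Γ X]
    (N : Γ →* ℝ) (hN : ∀ γ, 0 < N γ)
    (Y : Set X) (hY : IsClopen Y)
    (Yn : ℕ → Set X) (γn : ℕ → Γ)
    (hYnMeas : ∀ n, MeasurableSet (Yn n)) (hYnSub : ∀ n, Yn n ⊆ Y)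
    (hi : ∀ U : Set X, IsOpen U → boundarySet N Y ⊆ U →
      Y \ (⋃ s ∈ Sset N Y, s • U) ⊆ ⋃ n, Yn n)
    (hii : ∀ n, N (γn n) ≠ 1 ∧ γn n • Yn n = Yn n)
    (β : ℝ) (hβ : β ≠ 0) (Z : ℝ)
    (hsum : HasSum (fun s : Sset N Y => N s.1 ^ (-β)) Z)
    (μ : Measure X) [IsProbabilityMeasure μ] (hμ : IsScaling N Y β μ) :
    (∀ n, μ (Yn n) = 0) ∧ ENNReal.ofReal Z⁻¹ ≤ μ (boundarySet N Y) ∧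
      0 < μ (boundarySet N Y) := by
  have hYn (n : ℕ) : μ (Yn n) = 0 :=
    hμ.measure_eq_zero_of_smul_eq hN hβ (hYnMeas n) (hYnSub n) (hii n).1 (hii n).2
  have htsum : ∑' s : Sset N Y, ENNReal.ofReal (N s ^ (-β)) = ENNReal.ofReal Z := by
    rw [← hsum.tsum_eq, ENNReal.ofReal_tsum_of_nonneg (f := fun s : Sset N Y => N s.1 ^ (-β))
      (fun s => (Real.rpow_pos_of_pos (hN s.1) (-β)).le) hsum.summable]
  have hopen_le (U : Set X) (hU : IsOpen U) (hU₀ : boundarySet N Y ⊆ U) :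
      1 ≤ ENNReal.ofReal Z * μ U := by
    have hcover : Y ⊆ (⋃ s ∈ Sset N Y, s • (U ∩ Y)) ∪ ⋃ n, Yn n := fun x hx =>
      or_iff_not_imp_left.2 fun hx' =>
        hi _ (hU.inter hY.isOpen) (Set.subset_inter hU₀ Set.sdiff_subset) ⟨hx, hx'⟩
    calc 1 ≤ ENNReal.ofReal Z * μ (U ∩ Y) := by
          rw [← htsum]
          exact hμ.one_le_tsum_mul_measure hY.isOpen.measurableSet _
            (hU.inter hY.isOpen).measurableSet Set.inter_subset_right
            (measure_iUnion_null hYn) hcover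
      _ ≤ ENNReal.ofReal Z * μ U := by gcongr; exact Set.inter_subset_left
  have hZ : 0 < Z := ENNReal.ofReal_pos.1 <| pos_iff_ne_zero.2 fun hZ0 => by
    simpa [hZ0] using hopen_le Y hY.isOpen Set.sdiff_subset
  have hbound : ENNReal.ofReal Z⁻¹ ≤ μ (boundarySet N Y) :=
    μ.le_of_forall_isOpen_le fun U hU hU₀ => by
      rw [ENNReal.ofReal_inv_of_pos hZ, ENNReal.inv_le_iff_le_mul (by simp [hZ]) (by simp)]
      exact hopen_le U hU hU₀
  exact ⟨hYn, hbound, (ENNReal.ofReal_pos.2 (inv_pos.2 hZ)).trans_le hbound⟩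

/-- Under the standing hypotheses (i) and (ii), for a nonzero `β ∈ ℝ` such
that `(N(s)^{-β})_{s ∈ S}` is summable with sum `Z`, every `β`-scaling Borel probability
measure `μ` on `X` satisfies `μ(Yₙ) = 0` for all `n` and `μ(Y₀) ≥ 1/Z`; in particular
`μ(Y₀) > 0`. -/
theorem scaling_measure_vanishes_on_Yn_and_positive_on_boundary
    {Γ X : Type*} [Group Γ] [Countable Γ]
    [TopologicalSpace X] [LocallyCompactSpace X] [SecondCountableTopology X] [T2Space X]
    [MeasurableSpace X] [BorelSpace X] [MulAction Γ X] [ContinuousConstSMul Γ X]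
    (N : Γ →* ℝ) (hN : ∀ γ, 0 < N γ)
    (Y : Set X) (hY : IsClopen Y) (hYcov : (⋃ γ : Γ, γ • Y) = Set.univ)
    (Yn : ℕ → Set X) (γn : ℕ → Γ)
    (hYnMeas : ∀ n, MeasurableSet (Yn n)) (hYnSub : ∀ n, Yn n ⊆ Y)
    (hi : ∀ U : Set X, IsOpen U → boundarySet N Y ⊆ U →
      Y \ (⋃ s ∈ Sset N Y, s • U) ⊆ ⋃ n, Yn n)
    (hii : ∀ n, N (γn n) ≠ 1 ∧ γn n • Yn n = Yn n)
    (β : ℝ) (hβ : β ≠ 0) (Z : ℝ)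
    (hsum : HasSum (fun s : Sset N Y => N s.1 ^ (-β)) Z)
    (μ : Measure X) [IsProbabilityMeasure μ] (hμ : IsScaling N Y β μ) :
    (∀ n, μ (Yn n) = 0) ∧ ENNReal.ofReal Z⁻¹ ≤ μ (boundarySet N Y) ∧
      0 < μ (boundarySet N Y) :=
  scaling_measure_vanishes_on_Yn_and_positive_on_boundary_general N hN Y hY Yn γn hYnMeas hYnSub hi
    hii β hβ Z hsum μ hμ
end

section
/- Let β ∈ ℝ and let ν be a Borel measure on X with ν(X ∖ Y₀) = 0, ν(Y₀) = 1, and ν(γ·A) = ν(A) for every γ ∈ ker N and every Borel set A ⊆ Y₀ with γ·A ⊆ Y₀. Then there exists a Borel measure μ̃ on X such that: μ̃(γ·A) = N(γ)^{-β}·μ̃(A) for every γ ∈ Γ and every Borel set A ⊆ X; μ̃(A) = ν(A) for every Borel set A ⊆ Y₀; μ̃(X ∖ Γ·Y₀) = 0; and, if the family (N(s)^{-β})_{s ∈ S} is summable with sum Z, then μ̃(Y) ≤ Z. -/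
open Pointwise MeasureTheory

section Gluing

open Function

variable {ι α : Type*} [Countable ι] [MeasurableSpace α]

theorem exists_pairwise_disjoint_measurableSet_subset_iUnion_eq {s : ι → Set α}
    (hs : ∀ i, MeasurableSet (s i)) :
    ∃ t : ι → Set α, (∀ i, MeasurableSet (t i)) ∧ (∀ i, t i ⊆ s i) ∧
      Pairwise (Disjoint on t) ∧ ⋃ i, t i = ⋃ i, s i := by
  obtain ⟨e, he⟩ := Countable.exists_injective_nat ι
  -- `u` lists the sets `s i` along the injection `e`, padded with `∅`
  set u : ℕ → Set α := fun n => ⋃ (i) (_ : e i = n), s i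
  have hu : ∀ i, u (e i) = s i := fun i => by
    ext x
    simp only [u, Set.mem_iUnion]
    exact ⟨fun ⟨j, hj, hx⟩ => he hj ▸ hx, fun hx => ⟨i, rfl, hx⟩⟩
  have hts : ∀ i, disjointed u (e i) ⊆ s i := fun i => hu i ▸ disjointed_subset u (e i)
  refine ⟨fun i => disjointed u (e i),
    fun i => .disjointed (fun n => .iUnion fun i => .iUnion fun _ => hs i) _, hts,
    fun i j hij => disjoint_disjointed u (he.ne hij), ?_⟩
  refine (Set.iUnion_mono hts).antisymm fun x hx => ?_
  have hxu : x ∈ ⋃ n, u n := Set.iUnion_mono' (fun i => ⟨e i, (hu i).ge⟩) hx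
  rw [← iUnion_disjointed] at hxu
  obtain ⟨n, hn⟩ := Set.mem_iUnion.1 hxu
  obtain ⟨i, rfl, -⟩ := Set.mem_iUnion₂.1 (disjointed_subset u n hn)
  exact Set.mem_iUnion.2 ⟨i, hn⟩

theorem Measure.ext_of_forall_subset {μ₁ μ₂ : Measure α} {s : ι → Set α}
    (hs : ∀ i, MeasurableSet (s i))
    (h : ∀ i B, MeasurableSet B → B ⊆ s i → μ₁ B = μ₂ B)
    (h₁ : μ₁ (⋃ i, s i)ᶜ = 0) (h₂ : μ₂ (⋃ i, s i)ᶜ = 0) : μ₁ = μ₂ := by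
  rw [← Measure.restrict_eq_self_of_ae_mem (s := ⋃ i, s i) (mem_ae_iff.2 h₁),
    ← Measure.restrict_eq_self_of_ae_mem (s := ⋃ i, s i) (mem_ae_iff.2 h₂),
    Measure.restrict_iUnion_congr]
  refine fun i => Measure.ext fun B hB => ?_
  rw [Measure.restrict_apply hB, Measure.restrict_apply hB]
  exact h i _ (hB.inter (hs i)) Set.inter_subset_right

theorem Measure.exists_forall_subset_eq {m : ι → Measure α} {s : ι → Set α}
    (hs : ∀ i, MeasurableSet (s i))
    (hm : ∀ i j B, MeasurableSet B → B ⊆ s i → B ⊆ s j → m i B = m j B) :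
    ∃ μ : Measure α, (∀ i B, MeasurableSet B → B ⊆ s i → μ B = m i B) ∧ μ (⋃ i, s i)ᶜ = 0 := by
  obtain ⟨t, htm, hts, htd, htU⟩ := exists_pairwise_disjoint_measurableSet_subset_iUnion_eq hs
  refine ⟨Measure.sum fun i => (m i).restrict (t i), fun i B hB hBs => ?_, ?_⟩
  · have hdisj : Pairwise (Disjoint on fun j => B ∩ t j) := fun j k hjk =>
      (htd hjk).mono Set.inter_subset_right Set.inter_subset_right
    calc (Measure.sum fun j => (m j).restrict (t j)) B = ∑' j, m j (B ∩ t j) := by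
          simp only [Measure.sum_apply _ hB, Measure.restrict_apply hB]
      _ = ∑' j, m i (B ∩ t j) := by
          congr 1 with j
          exact hm j i _ (hB.inter (htm j)) (Set.inter_subset_right.trans (hts j))
            (Set.inter_subset_left.trans hBs)
      _ = m i B := by
          rw [← measure_iUnion hdisj fun j => hB.inter (htm j), ← Set.inter_iUnion, htU,
            Set.inter_eq_left.2 (hBs.trans (Set.subset_iUnion s i))]
  · rw [Measure.sum_apply_of_countable]
    refine ENNReal.tsum_eq_zero.2 fun i => ?_
    rw [Measure.restrict_apply' (htm i), ← htU]
    exact measure_mono_null (fun x hx => hx.1 (Set.mem_iUnion.2 ⟨i, hx.2⟩)) measure_empty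

end Gluing

section Boundary

variable {Γ X : Type*} [Group Γ] [MulAction Γ X] {N : Γ →* ℝ} {Y : Set X}

theorem ofReal_rpow_map_mul (hN : ∀ γ, 0 < N γ) (β : ℝ) (γ γ' : Γ) :
    ENNReal.ofReal (N (γ * γ') ^ (-β)) =
      ENNReal.ofReal (N γ ^ (-β)) * ENNReal.ofReal (N γ' ^ (-β)) := by
  rw [map_mul, Real.mul_rpow (hN γ).le (hN γ').le,
    ENNReal.ofReal_mul (Real.rpow_nonneg (hN γ).le _)]

theorem map_eq_one_of_mem_boundarySet_of_smul_mem (hN : ∀ γ, 0 < N γ) {g : Γ} {y : X}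
    (hy : y ∈ boundarySet N Y) (hgy : g • y ∈ boundarySet N Y) : N g = 1 := by
  by_contra hne
  rcases lt_or_gt_of_ne hne with hlt | hgt
  · refine hy.2 (Set.mem_iUnion₂.2 ⟨g⁻¹, ?_, g • y, hgy.1, inv_smul_smul g y⟩)
    rw [map_inv]
    exact (one_lt_inv₀ (hN g)).2 hlt
  · exact hgy.2 (Set.mem_iUnion₂.2 ⟨g, hgt, Set.smul_mem_smul_set hy.1⟩)

theorem map_eq_of_mem_smul_boundarySet (hN : ∀ γ, 0 < N γ) {γ₁ γ₂ : Γ} {x : X}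
    (h₁ : x ∈ γ₁ • boundarySet N Y) (h₂ : x ∈ γ₂ • boundarySet N Y) : N γ₁ = N γ₂ := by
  obtain ⟨y, hy, rfl⟩ := h₁
  have h : N (γ₂⁻¹ * γ₁) = 1 := map_eq_one_of_mem_boundarySet_of_smul_mem hN hy
    (by rw [mul_smul]; exact Set.mem_smul_set_iff_inv_smul_mem.1 h₂)
  rw [← mul_inv_cancel_left γ₂ γ₁, map_mul, h, mul_one]

variable [MeasurableSpace X] [MeasurableConstSMul Γ X]

theorem measurableSet_boundarySet [Countable Γ] (hY : MeasurableSet Y) :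
    MeasurableSet (boundarySet N Y) :=
  hY.diff (.iUnion fun γ => .iUnion fun _ => hY.const_smul γ)

noncomputable def scaledTranslate (N : Γ →* ℝ) (β : ℝ) (ν : Measure X) (γ : Γ) : Measure X :=
  ENNReal.ofReal (N γ ^ (-β)) • ν.map (γ • ·)

theorem scaledTranslate_apply (β : ℝ) (ν : Measure X) (γ : Γ) (B : Set X) :
    scaledTranslate N β ν γ B = ENNReal.ofReal (N γ ^ (-β)) * ν (γ⁻¹ • B) := by
  rw [scaledTranslate, Measure.smul_apply, smul_eq_mul,
    (measurableEmbedding_const_smul γ).map_apply, Set.preimage_smul]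

theorem scaledTranslate_congr (hN : ∀ γ, 0 < N γ) {β : ℝ} {ν : Measure X}
    (hinv : ∀ γ : Γ, N γ = 1 → ∀ A : Set X, MeasurableSet A → A ⊆ boundarySet N Y →
      γ • A ⊆ boundarySet N Y → ν (γ • A) = ν A)
    {γ₁ γ₂ : Γ} {B : Set X} (hB : MeasurableSet B) (h₁ : B ⊆ γ₁ • boundarySet N Y)
    (h₂ : B ⊆ γ₂ • boundarySet N Y) :
    scaledTranslate N β ν γ₁ B = scaledTranslate N β ν γ₂ B := by
  rcases B.eq_empty_or_nonempty with rfl | ⟨x, hx⟩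
  · simp
  have hN₁₂ : N γ₁ = N γ₂ := map_eq_of_mem_smul_boundarySet hN (h₁ hx) (h₂ hx)
  have hmove : (γ₂⁻¹ * γ₁) • γ₁⁻¹ • B = γ₂⁻¹ • B := by rw [smul_smul, mul_inv_cancel_right]
  have hker : N (γ₂⁻¹ * γ₁) = 1 := by rw [map_mul, map_inv, hN₁₂, inv_mul_cancel₀ (hN γ₂).ne']
  rw [scaledTranslate_apply, scaledTranslate_apply, hN₁₂, ← hmove,
    hinv _ hker _ (hB.const_smul _) (Set.subset_smul_set_iff.1 h₁)
      (hmove ▸ Set.subset_smul_set_iff.1 h₂)]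

variable [Countable Γ]

theorem measure_smul_of_forall_subset_eq_scaledTranslate (hN : ∀ γ, 0 < N γ) {β : ℝ}
    {ν : Measure X} {S₀ : Set X} (hS₀ : MeasurableSet S₀) {μ : Measure X}
    (hμ : ∀ γ B, MeasurableSet B → B ⊆ γ • S₀ → μ B = scaledTranslate N β ν γ B)
    (hμ₀ : μ (⋃ γ : Γ, γ • S₀)ᶜ = 0) (γ : Γ) (A : Set X) :
    μ (γ • A) = ENNReal.ofReal (N γ ^ (-β)) * μ A := by
  have hU : γ • (⋃ γ' : Γ, γ' • S₀) = ⋃ γ' : Γ, γ' • S₀ := by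
    simp only [Set.smul_set_iUnion, smul_smul]
    exact (mul_left_surjective γ).iUnion_comp fun γ' => γ' • S₀
  suffices μ.map (γ⁻¹ • ·) = ENNReal.ofReal (N γ ^ (-β)) • μ by
    rw [← smul_eq_mul, ← Measure.smul_apply, ← this,
      (measurableEmbedding_const_smul γ⁻¹).map_apply, Set.preimage_smul, inv_inv]
  refine Measure.ext_of_forall_subset (s := fun γ' : Γ => γ' • S₀) (hS₀.const_smul ·)
    (fun γ' B hB hBs => ?_) ?_ ?_
  · have hγB : γ • B ⊆ (γ * γ') • S₀ := by rw [mul_smul]; exact Set.smul_set_mono hBs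
    rw [(measurableEmbedding_const_smul γ⁻¹).map_apply, Set.preimage_smul, inv_inv,
      Measure.smul_apply, smul_eq_mul, hμ _ _ (hB.const_smul γ) hγB, hμ _ _ hB hBs,
      scaledTranslate_apply, scaledTranslate_apply, ofReal_rpow_map_mul hN, mul_assoc,
      mul_inv_rev, mul_smul, inv_smul_smul]
  · rw [(measurableEmbedding_const_smul γ⁻¹).map_apply, Set.preimage_smul, inv_inv,
      Set.smul_set_compl, hU, hμ₀]
  · rw [Measure.smul_apply, hμ₀, smul_zero]

theorem measure_le_tsum_Sset_of_forall_subset_eq_scaledTranslate {β : ℝ} {ν : Measure X}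
    (hν₁ : ν (boundarySet N Y) = 1) {μ : Measure X}
    (hμ : ∀ γ B, MeasurableSet B → B ⊆ γ • boundarySet N Y → μ B = scaledTranslate N β ν γ B)
    (hμ₀ : μ (⋃ γ : Γ, γ • boundarySet N Y)ᶜ = 0) (hY₀ : MeasurableSet (boundarySet N Y)) :
    μ Y ≤ ∑' s : Sset N Y, ENNReal.ofReal (N s ^ (-β)) := by
  have hcover :
      Y ⊆ (⋃ s : Sset N Y, s.1 • boundarySet N Y) ∪ (⋃ γ : Γ, γ • boundarySet N Y)ᶜ := by
    intro x hx
    by_cases hU : x ∈ ⋃ γ : Γ, γ • boundarySet N Y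
    · obtain ⟨γ, hγ⟩ := Set.mem_iUnion.1 hU
      exact Or.inl (Set.mem_iUnion.2 ⟨⟨γ, x, hγ, hx⟩, hγ⟩)
    · exact Or.inr hU
  calc μ Y ≤ μ (⋃ s : Sset N Y, s.1 • boundarySet N Y) + 0 :=
        (measure_mono hcover).trans (hμ₀ ▸ measure_union_le _ _)
    _ ≤ ∑' s : Sset N Y, μ (s.1 • boundarySet N Y) := by rw [add_zero]; exact measure_iUnion_le _
    _ = ∑' s : Sset N Y, ENNReal.ofReal (N s ^ (-β)) := by
        congr 1 with s
        rw [hμ s _ (hY₀.const_smul _) subset_rfl, scaledTranslate_apply, inv_smul_smul, hν₁,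
          mul_one]

end Boundary

theorem exists_scaling_extension_of_invariant_measure_on_boundary_general
    {Γ X : Type*} [Group Γ] [Countable Γ]
    [TopologicalSpace X]
    [MeasurableSpace X] [BorelSpace X] [MulAction Γ X] [ContinuousConstSMul Γ X]
    (N : Γ →* ℝ) (hN : ∀ γ, 0 < N γ)
    (Y : Set X) (hY : IsClopen Y)
    (β : ℝ) (ν : Measure X)
    (hν1 : ν (boundarySet N Y) = 1)
    (hinv : ∀ γ : Γ, N γ = 1 → ∀ A : Set X, MeasurableSet A → A ⊆ boundarySet N Y →
      γ • A ⊆ boundarySet N Y → ν (γ • A) = ν A) :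
    ∃ μt : Measure X,
      (∀ (γ : Γ) (A : Set X), MeasurableSet A →
        μt (γ • A) = ENNReal.ofReal (N γ ^ (-β)) * μt A) ∧
      (∀ A : Set X, MeasurableSet A → A ⊆ boundarySet N Y → μt A = ν A) ∧
      μt ((⋃ γ : Γ, γ • boundarySet N Y)ᶜ) = 0 ∧
      (∀ Z : ℝ, HasSum (fun s : Sset N Y => N s.1 ^ (-β)) Z →
        μt Y ≤ ENNReal.ofReal Z) := by
  have hY₀ : MeasurableSet (boundarySet N Y) :=
    measurableSet_boundarySet hY.isClosed.measurableSet
  obtain ⟨μ, hμ, hμ₀⟩ := Measure.exists_forall_subset_eq (m := scaledTranslate N β ν)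
    (fun γ => hY₀.const_smul γ) fun _ _ _ hB h₁ h₂ => scaledTranslate_congr hN hinv hB h₁ h₂
  refine ⟨μ, fun γ A _ => measure_smul_of_forall_subset_eq_scaledTranslate hN hY₀ hμ hμ₀ γ A,
    fun A hA hAs => ?_, hμ₀, fun Z hZ => ?_⟩
  · rw [hμ 1 A hA (by rwa [one_smul]), scaledTranslate_apply]
    simp
  · rw [← hZ.tsum_eq, ENNReal.ofReal_tsum_of_nonneg (fun _ => Real.rpow_nonneg (hN _).le _)
      hZ.summable]
    exact measure_le_tsum_Sset_of_forall_subset_eq_scaledTranslate hν1 hμ hμ₀ hY₀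

/-- Let `β ∈ ℝ` and let `ν` be a Borel measure concentrated on `Y₀` with
`ν(Y₀) = 1` that is invariant under the partial action of `ker N` on `Y₀`. Then `ν` extends
to a Borel measure `μ̃` on `X` satisfying `μ̃(γ·A) = N(γ)^{-β}·μ̃(A)` for every Borel `A ⊆ X`,
agreeing with `ν` on Borel subsets of `Y₀`, concentrated on `Γ·Y₀`, and with `μ̃(Y) ≤ Z`
whenever `(N(s)^{-β})_{s ∈ S}` is summable with sum `Z`. -/
theorem exists_scaling_extension_of_invariant_measure_on_boundary
    {Γ X : Type*} [Group Γ] [Countable Γ]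
    [TopologicalSpace X] [LocallyCompactSpace X] [SecondCountableTopology X] [T2Space X]
    [MeasurableSpace X] [BorelSpace X] [MulAction Γ X] [ContinuousConstSMul Γ X]
    (N : Γ →* ℝ) (hN : ∀ γ, 0 < N γ)
    (Y : Set X) (hY : IsClopen Y) (hYcov : (⋃ γ : Γ, γ • Y) = Set.univ)
    (β : ℝ) (ν : Measure X)
    (hν0 : ν ((boundarySet N Y)ᶜ) = 0) (hν1 : ν (boundarySet N Y) = 1)
    (hinv : ∀ γ : Γ, N γ = 1 → ∀ A : Set X, MeasurableSet A → A ⊆ boundarySet N Y →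
      γ • A ⊆ boundarySet N Y → ν (γ • A) = ν A) :
    ∃ μt : Measure X,
      (∀ (γ : Γ) (A : Set X), MeasurableSet A →
        μt (γ • A) = ENNReal.ofReal (N γ ^ (-β)) * μt A) ∧
      (∀ A : Set X, MeasurableSet A → A ⊆ boundarySet N Y → μt A = ν A) ∧
      μt ((⋃ γ : Γ, γ • boundarySet N Y)ᶜ) = 0 ∧
      (∀ Z : ℝ, HasSum (fun s : Sset N Y => N s.1 ^ (-β)) Z →
        μt Y ≤ ENNReal.ofReal Z) :=
  exists_scaling_extension_of_invariant_measure_on_boundary_general N hN Y hY β ν hν1 hinv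
end
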